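/- Fix reals h > 0, B > 0, and η with 0 < η < 1, and define ξ(m) = (h·(ln(2m/h) + 1) − ln(η/4)) / m for real m > 0, and the risk bound R̄(r, m) = r + 2B·ξ(m)·(1 + √(1 + r/(B·ξ(m)))) for empirical risk value r ≥ 0 and sample size m > 0. Let m and m* be real numbers with h/2 ≤ m ≤ m*, and let r, r* be real numbers with 0 ≤ r* ≤ r (r being the empirical risk attained with m observations and r* the empirical risk attained with m* observations). Then R̄(r, m) ≥ R̄(r*, m*). -/

import Mathlib

/-- Rewriting of the bound term. -/
lemma vapnik_form (a r : ℝ) (ha : 0 < a) (hr : 0 ≤ r) :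
    r + 2 * a * (1 + Real.sqrt (1 + r / a))
      = r + 2 * a + 2 * (Real.sqrt a * Real.sqrt (a + r)) := by
  have h1 : (1 : ℝ) + r / a = (a + r) / a := by field_simp
  rw [h1, Real.sqrt_div (by positivity) a]
  have hsa : 0 < Real.sqrt a := Real.sqrt_pos.2 ha
  have h2 : a * (Real.sqrt (a + r) / Real.sqrt a)
      = Real.sqrt a * Real.sqrt (a + r) := by
    rw [mul_div_assoc']
    rw [div_eq_iff (ne_of_gt hsa)]
    linear_combination (-Real.sqrt (a + r)) * Real.mul_self_sqrt ha.le
  nlinarith [h2]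

/-- Monotonicity of the Vapnik bound in `a = Bξ` and `r`. -/
lemma vapnik_aux (a a' r r' : ℝ) (ha' : 0 < a') (ha : a' ≤ a)
    (hr' : 0 ≤ r') (hr : r' ≤ r) :
    r' + 2 * a' * (1 + Real.sqrt (1 + r' / a')) ≤
      r + 2 * a * (1 + Real.sqrt (1 + r / a)) := by
  have ha0 : 0 < a := lt_of_lt_of_le ha' ha
  rw [vapnik_form a' r' ha' hr', vapnik_form a r ha0 (hr'.trans hr)]
  have h1 : Real.sqrt a' ≤ Real.sqrt a := Real.sqrt_le_sqrt ha
  have h2 : Real.sqrt (a' + r') ≤ Real.sqrt (a + r) :=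
    Real.sqrt_le_sqrt (by linarith)
  have h3 : Real.sqrt a' * Real.sqrt (a' + r') ≤ Real.sqrt a * Real.sqrt (a + r) :=
    mul_le_mul h1 h2 (Real.sqrt_nonneg _) (Real.sqrt_nonneg _)
  linarith

/-- Proposition 2: the right-hand side
`R̄(r, m) = r + 2Bξ(m)(1 + √(1 + r/(Bξ(m))))` of Vapnik's generalization bound,
with capacity term `ξ(m) = (h (ln(2m/h) + 1) − ln(η/4)) / m`, does not improve
when the sample size decreases: if `h/2 ≤ m ≤ m*` and `0 ≤ r* ≤ r`, then
`R̄(r, m) ≥ R̄(r*, m*)`. -/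
theorem risk_bound_ge_of_smaller_sample
    (h B η : ℝ) (hh : 0 < h) (hB : 0 < B) (hη0 : 0 < η) (hη1 : η < 1)
    (ξ : ℝ → ℝ)
    (hξ : ∀ m : ℝ, 0 < m →
      ξ m = (h * (Real.log (2 * m / h) + 1) - Real.log (η / 4)) / m)
    (Rbar : ℝ → ℝ → ℝ)
    (hRbar : ∀ r m : ℝ,
      Rbar r m = r + 2 * B * ξ m * (1 + Real.sqrt (1 + r / (B * ξ m))))
    (m mstar r rstar : ℝ)
    (hm : h / 2 ≤ m) (hmm : m ≤ mstar)
    (hrstar : 0 ≤ rstar) (hrr : rstar ≤ r) :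
    Rbar rstar mstar ≤ Rbar r m := by
  have hm0 : 0 < m := lt_of_lt_of_le (by linarith) hm
  have hms0 : 0 < mstar := lt_of_lt_of_le hm0 hmm
  have hc : Real.log (η / 4) < 0 := Real.log_neg (by positivity) (by linarith)
  have hL : 0 ≤ Real.log (2 * m / h) :=
    Real.log_nonneg (by rw [le_div_iff₀ hh]; linarith)
  have hS : m * Real.log (mstar / m) ≤ mstar - m := by
    have h1 : Real.log (mstar / m) ≤ mstar / m - 1 :=
      Real.log_le_sub_one_of_pos (by positivity)
    calc m * Real.log (mstar / m) ≤ m * (mstar / m - 1) :=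
          mul_le_mul_of_nonneg_left h1 hm0.le
      _ = mstar - m := by field_simp
  have hLstar : Real.log (2 * mstar / h)
      = Real.log (2 * m / h) + Real.log (mstar / m) := by
    rw [← Real.log_mul (by positivity) (by positivity)]
    congr 1
    field_simp
  have hξle : ξ mstar ≤ ξ m := by
    rw [hξ m hm0, hξ mstar hms0, hLstar, div_le_div_iff₀ hms0 hm0]
    nlinarith [mul_le_mul_of_nonneg_left hS hh.le,
      mul_nonneg hL (sub_nonneg.2 hmm),
      mul_nonneg (neg_nonneg.2 hc.le) (sub_nonneg.2 hmm)]
  have hξpos : 0 < ξ mstar := by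
    rw [hξ mstar hms0, hLstar]
    have hS0 : 0 ≤ Real.log (mstar / m) :=
      Real.log_nonneg (by rw [le_div_iff₀ hm0]; linarith)
    have hnum : 0 < h * (Real.log (2 * m / h) + Real.log (mstar / m) + 1)
        - Real.log (η / 4) := by nlinarith
    positivity
  rw [hRbar rstar mstar, hRbar r m]
  have h1 : B * ξ mstar ≤ B * ξ m := by nlinarith
  have h2 : 0 < B * ξ mstar := by positivity
  have key := vapnik_aux (B * ξ m) (B * ξ mstar) r rstar h2 h1 hrstar hrr
  calc rstar + 2 * B * ξ mstar * (1 + Real.sqrt (1 + rstar / (B * ξ mstar)))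
      = rstar + 2 * (B * ξ mstar) * (1 + Real.sqrt (1 + rstar / (B * ξ mstar))) := by
        ring
    _ ≤ r + 2 * (B * ξ m) * (1 + Real.sqrt (1 + r / (B * ξ m))) := key
    _ = r + 2 * B * ξ m * (1 + Real.sqrt (1 + r / (B * ξ m))) := by ring
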